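/- arXiv:2210.14806 — 2 statements merged into one kernel-verified Lean document; each statement's English description precedes it below -/
import Mathlib

section
/- Let ξ > 0, b > 0, t ∈ ℝ, and on the segment {(x, y) : y = ((t − b/2)/ξ)x + b/2, 0 ≤ x ≤ ξ} define C(x,y) = x²/(ξ√(x² + (y − b/2)²)) and the unit normal N = (b/2 − t, ξ)/√(ξ² + (b/2 − t)²). Then the spatial gradient of C extended by the same formula satisfies ∇C · N = 2(b/2 − t)/(ξ² + (t − b/2)²) at every point of the open segment. -/
/-!
In polar coordinates `(r, θ)` about the apex `(0, b/2)` the field is `C = r cos² θ / ξ`. The edge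
is the ray `tan θ = (t - b/2)/ξ` and `N` is the angular direction there, so
`∇C · N = r⁻¹ ∂C/∂θ = -2 sin θ cos θ / ξ = 2 (b/2 - t) / (ξ² + (t - b/2)²)`.
-/

open Real

/-- The velocity field `C(x,y) = x² / (ξ √(x² + (y − b/2)²))` extended off the segment. -/
noncomputable def Cfield (ξ b : ℝ) (x y : ℝ) : ℝ :=
  x^2 / (ξ * Real.sqrt (x^2 + (y - b/2)^2))

section Partials

variable {ξ b x y : ℝ}

theorem hasDerivAt_Cfield_fst (hξ : ξ ≠ 0) (hr : 0 < x^2 + (y - b/2)^2) :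
    HasDerivAt (fun x' => Cfield ξ b x' y)
      (x * (x^2 + 2 * (y - b/2)^2) / (ξ * √(x^2 + (y - b/2)^2) ^ 3)) x := by
  have hsq : √(x^2 + (y - b/2)^2) ^ 2 = x^2 + (y - b/2)^2 := sq_sqrt hr.le
  have hpos : 0 < √(x^2 + (y - b/2)^2) := sqrt_pos.mpr hr
  have hnum : HasDerivAt (fun x' : ℝ => x'^2) (2 * x) x := by
    simpa using hasDerivAt_pow 2 x
  have hden := ((hnum.add_const ((y - b/2)^2)).sqrt hr.ne').const_mul ξ
  refine (hnum.div hden (by positivity)).congr_deriv ?_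
  generalize √(x^2 + (y - b/2)^2) = r at hsq hpos
  generalize y - b/2 = u at hsq
  field_simp
  linear_combination 2 * x * hsq

theorem hasDerivAt_Cfield_snd (hξ : ξ ≠ 0) (hr : 0 < x^2 + (y - b/2)^2) :
    HasDerivAt (fun y' => Cfield ξ b x y')
      (-(x^2 * (y - b/2)) / (ξ * √(x^2 + (y - b/2)^2) ^ 3)) y := by
  have hpos : 0 < √(x^2 + (y - b/2)^2) := sqrt_pos.mpr hr
  have hshift : HasDerivAt (fun y' : ℝ => (y' - b/2)^2) (2 * (y - b/2)) y := by
    simpa using ((hasDerivAt_id y).sub_const (b/2)).fun_pow 2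
  have hden := ((hshift.const_add (x^2)).sqrt hr.ne').const_mul ξ
  refine ((hasDerivAt_const y (x^2)).div hden (by positivity)).congr_deriv ?_
  generalize √(x^2 + (y - b/2)^2) = r at hpos
  field_simp
  ring

end Partials

theorem sqrt_sq_add_sq_mul_div {x ξ : ℝ} (s : ℝ) (hx : 0 < x) (hξ : 0 < ξ) :
    √(x^2 + (s * x / ξ)^2) = x * √(ξ^2 + s^2) / ξ := by
  rw [show x^2 + (s * x / ξ)^2 = (x / ξ)^2 * (ξ^2 + s^2) by field_simp,
    sqrt_mul (by positivity), sqrt_sq (by positivity)]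
  ring

theorem grad_C_dot_N_general (ξ b t : ℝ) :
    ∀ x : ℝ, 0 < x → x < ξ →
      ∀ y : ℝ, y = ((t - b/2) / ξ) * x + b/2 →
        deriv (fun x' : ℝ => Cfield ξ b x' y) x
            * ((b/2 - t) / Real.sqrt (ξ^2 + (b/2 - t)^2))
          + deriv (fun y' : ℝ => Cfield ξ b x y') y
            * (ξ / Real.sqrt (ξ^2 + (b/2 - t)^2))
        = 2 * (b/2 - t) / (ξ^2 + (t - b/2)^2) := by
  intro x hx hxξ y hy
  have hξ : 0 < ξ := hx.trans hxξ
  have hr : 0 < x^2 + (y - b/2)^2 := by positivity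
  have hu : y - b/2 = (t - b/2) * x / ξ := by rw [hy]; ring
  rw [(hasDerivAt_Cfield_fst hξ.ne' hr).deriv, (hasDerivAt_Cfield_snd hξ.ne' hr).deriv, hu,
    sqrt_sq_add_sq_mul_div _ hx hξ, show (b/2 - t)^2 = (t - b/2)^2 by ring]
  have hK : 0 < √(ξ^2 + (t - b/2)^2) := by positivity
  have hK2 : √(ξ^2 + (t - b/2)^2) ^ 2 = ξ^2 + (t - b/2)^2 := sq_sqrt (by positivity)
  generalize √(ξ^2 + (t - b/2)^2) = K at hK hK2 ⊢
  field_simp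
  rw [show K^4 = (K^2)^2 by ring, hK2]
  ring

theorem grad_C_dot_N (ξ b t : ℝ) (hξ : 0 < ξ) (hb : 0 < b) :
    ∀ x : ℝ, 0 < x → x < ξ →
      ∀ y : ℝ, y = ((t - b/2) / ξ) * x + b/2 →
        deriv (fun x' : ℝ => Cfield ξ b x' y) x
            * ((b/2 - t) / Real.sqrt (ξ^2 + (b/2 - t)^2))
          + deriv (fun y' : ℝ => Cfield ξ b x y') y
            * (ξ / Real.sqrt (ξ^2 + (b/2 - t)^2))
        = 2 * (b/2 - t) / (ξ^2 + (t - b/2)^2) :=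
  grad_C_dot_N_general ξ b t
end

section
/- Let f : ℝ → ℝ be twice continuously differentiable with ‖f‖_∞ and ‖f''‖_∞ finite. Then ‖f'‖_∞ ≤ 2√(‖f''‖_∞ · ‖f‖_∞). -/
open Real

lemma landau_key (f : ℝ → ℝ) (hf : ContDiff ℝ 2 f)
    (M₀ M₂ : ℝ) (hM₀ : ∀ x, |f x| ≤ M₀) (hM₂ : ∀ x, |deriv (deriv f) x| ≤ M₂)
    (x h : ℝ) (hh : 0 < h) : |deriv f x| ≤ h * M₂ + M₀ / h := by
  set y := x + 2 * h with hy
  have hxy : x < y := by simp [hy]; linarith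
  have hdf : Differentiable ℝ f := hf.differentiable (by norm_num)
  have hdf' : Differentiable ℝ (deriv f) := by
    have h2 : ContDiff ℝ ((1:ℕ∞) + 1) f := hf
    exact (contDiff_succ_iff_deriv.mp h2).2.2.differentiable (by norm_num)
  have hud : UniqueDiffOn ℝ (Set.Icc x y) := uniqueDiffOn_Icc hxy
  have hdWeq : ∀ z ∈ Set.Icc x y, derivWithin f (Set.Icc x y) z = deriv f z := fun z hz =>
    (hdf z).derivWithin (hud z hz)
  obtain ⟨θ, hθ, heq⟩ := taylor_mean_remainder_lagrange (f := f) (n := 1) (x₀ := x) (x := y) hxy.ne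
    (hf.contDiffOn.of_le (by norm_num))
    (by
      rw [Set.uIcc_of_le hxy.le, Set.uIoo_of_le hxy.le]
      apply (hdf'.differentiableOn).congr
      intro z hz
      have hz' : z ∈ Set.Icc x y := Set.Ioo_subset_Icc_self hz
      rw [iteratedDerivWithin_one, hdWeq z hz'])
  rw [Set.uIcc_of_le hxy.le] at heq
  rw [Set.uIoo_of_le hxy.le] at hθ
  have h2 : iteratedDerivWithin 2 f (Set.Icc x y) θ = deriv (deriv f) θ := by
    have hθ' : θ ∈ Set.Icc x y := Set.Ioo_subset_Icc_self hθ
    rw [show (2 : ℕ) = 1 + 1 from rfl, iteratedDerivWithin_succ]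
    have heqon : Set.EqOn (iteratedDerivWithin 1 f (Set.Icc x y)) (deriv f) (Set.Icc x y) := by
      intro w hw
      rw [iteratedDerivWithin_one]
      exact hdWeq w hw
    rw [derivWithin_congr heqon (heqon hθ')]
    exact (hdf' θ).derivWithin (hud θ hθ')
  have htay : taylorWithinEval f 1 (Set.Icc x y) x y = f x + deriv f x * (y - x) := by
    rw [taylor_within_apply]
    simp [Finset.sum_range_succ, iteratedDerivWithin_one,
      hdWeq x (Set.left_mem_Icc.mpr hxy.le)]
    ring
  have hyx : y - x = 2 * h := by rw [hy]; ring
  rw [htay, h2, hyx] at heq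
  norm_num at heq
  have key : deriv f x * (2 * h) = f y - f x - deriv (deriv f) θ * (2 * h) ^ 2 / 2 := by
    rw [hy]; linarith
  have hb : |deriv f x| * (2 * h) ≤ 2 * M₀ + M₂ * (2 * h) ^ 2 / 2 := by
    rw [← abs_of_pos (show (0:ℝ) < 2 * h by positivity), ← abs_mul, key]
    have h1 := hM₀ x; have h2' := hM₀ y; have h3 := hM₂ θ
    have habs : |f y - f x - deriv (deriv f) θ * (2 * h) ^ 2 / 2| ≤
        |f y| + |f x| + |deriv (deriv f) θ| * (2 * h) ^ 2 / 2 := by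
      calc _ ≤ |f y - f x| + |deriv (deriv f) θ * (2 * h) ^ 2 / 2| := abs_sub _ _
        _ ≤ |f y| + |f x| + |deriv (deriv f) θ| * (2 * h) ^ 2 / 2 := by
            rw [abs_div, abs_mul, abs_pow]
            have := abs_sub (f y) (f x)
            simp only [abs_two, abs_of_pos (show (0:ℝ) < 2*h by positivity)] at *
            linarith
    rw [sq_abs]
    nlinarith [abs_nonneg (deriv (deriv f) θ), sq_nonneg h]
  have hb' : |deriv f x| ≤ (2 * M₀ + M₂ * (2 * h) ^ 2 / 2) / (2 * h) :=
    (le_div_iff₀ (by positivity)).mpr hb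
  have heq2 : (2 * M₀ + M₂ * (2 * h) ^ 2 / 2) / (2 * h) = h * M₂ + M₀ / h := by
    field_simp; ring
  linarith

theorem landau_inequality (f : ℝ → ℝ) (hf : ContDiff ℝ 2 f)
    (M₀ M₂ : ℝ) (hM₀ : ∀ x, |f x| ≤ M₀) (hM₂ : ∀ x, |deriv (deriv f) x| ≤ M₂) :
    ∀ x, |deriv f x| ≤ 2 * Real.sqrt (M₂ * M₀) := by
  intro x
  have key := landau_key f hf M₀ M₂ hM₀ hM₂ x
  have hM₀0 : 0 ≤ M₀ := le_trans (abs_nonneg _) (hM₀ 0)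
  have hM₂0 : 0 ≤ M₂ := le_trans (abs_nonneg _) (hM₂ 0)
  rcases eq_or_lt_of_le hM₂0 with h2 | h2
  · -- M₂ = 0
    have hsmall : ∀ ε > 0, |deriv f x| ≤ ε := by
      intro ε hε
      have hk := key (M₀ / ε + 1) (by positivity)
      rw [← h2] at hk
      have he : ε * (M₀ / ε + 1) = M₀ + ε := by field_simp
      have hd : M₀ / (M₀ / ε + 1) ≤ ε := by
        rw [div_le_iff₀ (by positivity)]
        linarith
      linarith [hk, mul_nonneg (by positivity : (0:ℝ) ≤ M₀ / ε + 1) (le_refl (0:ℝ))]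
    have h0 : |deriv f x| ≤ 0 := le_of_forall_pos_le_add (fun ε hε => by
      simpa using hsmall ε hε)
    calc |deriv f x| ≤ 0 := h0
      _ ≤ _ := by positivity
  rcases eq_or_lt_of_le hM₀0 with h0 | h0
  · -- M₀ = 0
    have hsmall : ∀ ε > 0, |deriv f x| ≤ ε := by
      intro ε hε
      have hk := key (ε / M₂) (by positivity)
      rw [← h0] at hk
      calc |deriv f x| ≤ ε / M₂ * M₂ + 0 / (ε / M₂) := hk
        _ = ε := by field_simp; ring
    have h0' : |deriv f x| ≤ 0 := le_of_forall_pos_le_add (fun ε hε => by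
      simpa using hsmall ε hε)
    calc |deriv f x| ≤ 0 := h0'
      _ ≤ _ := by positivity
  · -- both positive
    have hs2 : (0:ℝ) < Real.sqrt M₂ := Real.sqrt_pos.mpr h2
    have hs0 : (0:ℝ) < Real.sqrt M₀ := Real.sqrt_pos.mpr h0
    have hk := key (Real.sqrt M₀ / Real.sqrt M₂) (by positivity)
    have ha : Real.sqrt M₀ ^ 2 = M₀ := Real.sq_sqrt hM₀0
    have hb : Real.sqrt M₂ ^ 2 = M₂ := Real.sq_sqrt hM₂0
    calc |deriv f x| ≤ _ := hk
      _ = 2 * Real.sqrt (M₂ * M₀) := by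
          rw [Real.sqrt_mul hM₂0, ← ha, ← hb]
          field_simp
          simp only [Real.sqrt_sq hs0.le, Real.sqrt_sq hs2.le]
          nlinarith [Real.mul_self_sqrt hM₀0, Real.mul_self_sqrt hM₂0]
end
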